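/- arXiv:1210.0084 — 3 statements merged into one kernel-verified Lean document; each statement's English description precedes it below -/
import Mathlib

section
/- (Proposition 3, perfect reconstruction of the sliCQ transform.) Let L, N ∈ ℕ with N ∣ L and 2N ≤ L. Let I_K be a finite index set and, for k ∈ I_K, let g_k, g̃_k ∈ ℂ^{2N} and M_k ∈ ℕ, M_k ≥ 1, such that the systems ψ_{n,k}[j] = e^{−2πi·jn/M_k}·g_k[j] and ψ̃_{n,k}[j] = e^{−2πi·jn/M_k}·g̃_k[j] (j ∈ ℤ/2Nℤ, n = 0,…,M_k−1) are dual on ℂ^{2N}, i.e. Σ_{k,n} ⟨h, ψ_{n,k}⟩·ψ̃_{n,k} = h for all h ∈ ℂ^{2N}. Let h₀, h̃₀ ∈ ℂ^L be such that the product h₀·conj(h̃₀) vanishes outside the 2N consecutive residues {−N, …, N−1} mod L and Σ_{m=0}^{L/N−1} (h₀·conj(h̃₀))[l − mN] = 1 for every l ∈ ℤ/Lℤ. For f ∈ ℂ^L, define the slices f^m ∈ ℂ^{2N} (m = 0,…,L/N−1) by f^m[j] = f[(j+(m−1)N) mod L]·h₀[(j−N) mod L], the slice coefficients c^m_{n,k}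 = ⟨(f^m)^, ψ_{n,k}⟩ (DFT and inner product on ℂ^{2N}), the reconstructed slices f̃^m = inverse DFT_{2N} of Σ_{k,n} c^m_{n,k}·ψ̃_{n,k}, and the sliCQ synthesis output f̃ ∈ ℂ^L by f̃[i] = Σ_{m=0}^{L/N−1} Σ_{j=0,…,2N−1 with j+(m−1)N ≡ i (mod L)} f̃^m[j]·conj(h̃₀[(j−N) mod L]). Then f̃ = f. -/
/-- Inner product on ℂ^P: ⟨f,g⟩ = Σ_{l=0}^{P-1} f[l]·conj(g[l]). -/
noncomputable def ip (P : ℕ) (f g : ZMod P → ℂ) : ℂ :=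
  ∑ l ∈ Finset.range P, f l * (starRingEnd ℂ) (g l)

/-- Discrete Fourier transform on ℂ^P: f̂[j] = P^{-1/2}·Σ_{l=0}^{P-1} f[l]·e^{-2πi·lj/P}. -/
noncomputable def dft (P : ℕ) (f : ZMod P → ℂ) : ZMod P → ℂ :=
  fun j => ((Real.sqrt P : ℂ))⁻¹ *
    ∑ l ∈ Finset.range P, f l * Complex.exp (-(2 * Real.pi * Complex.I * (l : ℂ) * (j.val : ℂ)) / P)

/-- Inverse discrete Fourier transform on ℂ^P: ǧ[l] = P^{-1/2}·Σ_{j=0}^{P-1} g[j]·e^{2πi·lj/P}. -/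
noncomputable def idft (P : ℕ) (g : ZMod P → ℂ) : ZMod P → ℂ :=
  fun l => ((Real.sqrt P : ℂ))⁻¹ *
    ∑ j ∈ Finset.range P, g j * Complex.exp (2 * Real.pi * Complex.I * (l.val : ℂ) * (j : ℂ) / P)

/-!
Each slice is recovered exactly: its coefficients are the frame analysis of its DFT, duality of
`ψ` and `ψ̃` resynthesises that DFT, and the normalised DFT is inverted (it is a rescaling of
Mathlib's `ZMod.dft`). In the overlap-add, `2N ≤ L` lets at most one index `j` of slice `m` land on
a residue `i`, contributing `f i · h₀ · conj h̃₀` at `i - mN`; when there is none that product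
vanishes by the support condition. Summing over `m`, the partition of unity leaves `f i`.
-/

open Finset Complex
open scoped ZMod

lemma sum_range_eq_sum_zmod {M : Type*} [AddCommMonoid M] {P : ℕ} [NeZero P] (F : ℕ → M) :
    ∑ l ∈ range P, F l = ∑ x : ZMod P, F x.val :=
  sum_nbij' (fun l => (l : ZMod P)) ZMod.val (by simp) (by simp [ZMod.val_lt])
    (fun l hl => by simp [ZMod.val_natCast_of_lt (mem_range.1 hl)]) (by simp)
    (fun l hl => by simp [ZMod.val_natCast_of_lt (mem_range.1 hl)])

lemma ZMod.stdAddChar_mul {P : ℕ} [NeZero P] (x y : ZMod P) :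
    stdAddChar (x * y) = exp (2 * Real.pi * I * x.val * y.val / P) := by
  have := stdAddChar_coe (N := P) ((x.val * y.val : ℕ) : ℤ)
  push_cast at this
  simpa [mul_assoc] using this

lemma ZMod.stdAddChar_neg_mul {P : ℕ} [NeZero P] (x y : ZMod P) :
    stdAddChar (-(x * y)) = exp (-(2 * Real.pi * I * x.val * y.val) / P) := by
  rw [AddChar.map_neg_eq_inv, stdAddChar_mul, ← Complex.exp_neg, neg_div]

lemma dft_eq_inv_sqrt_smul_dft {P : ℕ} [NeZero P] (f : ZMod P → ℂ) :
    dft P f = ((Real.sqrt P : ℂ))⁻¹ • 𝓕 f := by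
  ext j
  simp only [dft, Pi.smul_apply, ZMod.dft_apply, smul_eq_mul, sum_range_eq_sum_zmod (P := P),
    ZMod.natCast_zmod_val, ZMod.stdAddChar_neg_mul]
  exact congrArg _ (sum_congr rfl fun x _ => mul_comm _ _)

lemma idft_eq_sqrt_smul_invDFT {P : ℕ} [NeZero P] (g : ZMod P → ℂ) :
    idft P g = (Real.sqrt P : ℂ) • 𝓕⁻ g := by
  ext l
  have hP : (Real.sqrt P : ℂ) ≠ 0 := by simp [NeZero.ne P]
  simp only [idft, Pi.smul_apply, ZMod.invDFT_apply, smul_eq_mul, sum_range_eq_sum_zmod (P := P),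
    ZMod.natCast_zmod_val, ZMod.stdAddChar_mul]
  have hsq : (Real.sqrt P : ℂ) * Real.sqrt P = P := by
    exact_mod_cast Real.mul_self_sqrt (Nat.cast_nonneg P)
  rw [← mul_assoc, ← hsq, mul_inv, ← mul_assoc, mul_inv_cancel₀ hP, one_mul]
  exact congrArg _ (sum_congr rfl fun x _ => by ring_nf)

lemma idft_dft {P : ℕ} [NeZero P] (f : ZMod P → ℂ) : idft P (dft P f) = f := by
  have hP : (Real.sqrt P : ℂ) ≠ 0 := by simp [NeZero.ne P]
  rw [idft_eq_sqrt_smul_invDFT, dft_eq_inv_sqrt_smul_dft, _root_.map_smul,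
    LinearEquiv.symm_apply_apply, smul_smul, mul_inv_cancel₀ hP, one_smul]

lemma ZMod.natCast_injOn_range {L n : ℕ} (hn : n ≤ L) :
    Set.InjOn (Nat.cast : ℕ → ZMod L) (range n) := fun a ha b hb hab => by
  have hval := congrArg ZMod.val hab
  rwa [ZMod.val_natCast_of_lt ((mem_range.1 ha).trans_le hn),
    ZMod.val_natCast_of_lt ((mem_range.1 hb).trans_le hn)] at hval

lemma sum_filter_natCast_add_eq {M : Type*} [AddCommMonoid M] {L n : ℕ} (hn : n ≤ L)
    (A i : ZMod L) (G : ZMod L → M)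
    (hG : ∀ l ∉ (range n).image (Nat.cast : ℕ → ZMod L), G l = 0) :
    ∑ j ∈ (range n).filter (fun j : ℕ => (j : ZMod L) + A = i), G j = G (i - A) := by
  rw [← sum_image ((ZMod.natCast_injOn_range hn).mono (filter_subset _ _)),
    ← filter_image (p := fun x => x + A = i), sum_filter]
  simp_rw [← eq_sub_iff_add_eq]
  rw [sum_ite_eq']
  split_ifs with hmem
  · rfl
  · exact (hG _ hmem).symm

lemma sum_filter_window_eq {L N : ℕ} (h2NL : 2 * N ≤ L) (f w : ZMod L → ℂ)
    (hw : ∀ l ∉ (range (2 * N)).image (fun i : ℕ => (i : ZMod L) - N), w l = 0) (A i : ZMod L) :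
    ∑ j ∈ (range (2 * N)).filter (fun j : ℕ => (j : ZMod L) + A = i), f (j + A) * w (j - N)
      = f i * w (i - A - N) := by
  rw [sum_filter_natCast_add_eq h2NL A i (fun x => f (x + A) * w (x - N)), sub_add_cancel]
  intro l hl
  refine mul_eq_zero_of_right _ (hw _ fun hmem => hl ?_)
  obtain ⟨j, hj, hjl⟩ := mem_image.1 hmem
  exact mem_image.2 ⟨j, hj, sub_left_inj.1 hjl⟩

theorem slicq_stmt8_general {L N : ℕ} (hN : 1 ≤ N) (h2NL : 2 * N ≤ L)
    {ι : Type*} [Fintype ι]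
    (M : ι → ℕ)
    (ψ ψt : ι → ℕ → ZMod (2 * N) → ℂ)
    (hdual : ∀ h : ZMod (2 * N) → ℂ, ∀ j : ZMod (2 * N),
      ∑ k : ι, ∑ n ∈ Finset.range (M k), ip (2 * N) h (ψ k n) * ψt k n j = h j)
    (h0 ht0 : ZMod L → ℂ)
    (hsupp : ∀ l : ZMod L,
      l ∉ (Finset.range (2 * N)).image (fun i : ℕ => (i : ZMod L) - (N : ZMod L)) →
        h0 l * (starRingEnd ℂ) (ht0 l) = 0)
    (hpart : ∀ l : ZMod L,
      ∑ m ∈ Finset.range (L / N),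
        h0 (l - ((m * N : ℕ) : ZMod L)) * (starRingEnd ℂ) (ht0 (l - ((m * N : ℕ) : ZMod L))) = 1)
    (f : ZMod L → ℂ)
    -- the slices f^m[j] = f[j+(m-1)N]·h₀[j-N]
    (fs : ℕ → ZMod (2 * N) → ℂ)
    (hfs : ∀ (m : ℕ) (j : ZMod (2 * N)),
      fs m j = f ((j.val : ZMod L) + ((((m : ℤ) - 1) * (N : ℤ) : ℤ) : ZMod L)) *
        h0 ((j.val : ZMod L) - (N : ZMod L)))
    -- the slice coefficients c^m_{n,k} = ⟨(f^m)^, ψ_{n,k}⟩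
    (c : ℕ → ι → ℕ → ℂ)
    (hc : ∀ m k n, c m k n = ip (2 * N) (dft (2 * N) (fs m)) (ψ k n))
    -- the reconstructed slices f̃^m
    (ftld : ℕ → ZMod (2 * N) → ℂ)
    (hftld : ∀ m : ℕ,
      ftld m = idft (2 * N) (fun j => ∑ k : ι, ∑ n ∈ Finset.range (M k), c m k n * ψt k n j))
    -- the sliCQ synthesis output f̃ by windowed overlap-add
    (fout : ZMod L → ℂ)
    (hfout : ∀ i : ZMod L,
      fout i = ∑ m ∈ Finset.range (L / N),
        ∑ j ∈ (Finset.range (2 * N)).filter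
            (fun j : ℕ => (j : ZMod L) + ((((m : ℤ) - 1) * (N : ℤ) : ℤ) : ZMod L) = i),
          ftld m (j : ZMod (2 * N)) * (starRingEnd ℂ) (ht0 ((j : ZMod L) - (N : ZMod L)))) :
    fout = f := by
  have : NeZero (2 * N) := ⟨by omega⟩
  have hslice (m : ℕ) : ftld m = fs m := by
    simp only [hftld, hc, hdual]
    exact idft_dft _
  funext i
  rw [hfout]
  calc _ = ∑ m ∈ range (L / N), f i * (h0 (i - ((m * N : ℕ) : ZMod L)) *
          (starRingEnd ℂ) (ht0 (i - ((m * N : ℕ) : ZMod L)))) := sum_congr rfl fun m _ => ?_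
    _ = f i := by rw [← mul_sum, hpart, mul_one]
  set A : ZMod L := ((((m : ℤ) - 1) * (N : ℤ) : ℤ) : ZMod L)
  have hmN : i - A - N = i - ((m * N : ℕ) : ZMod L) := by simp only [A]; push_cast; ring
  rw [← hmN, ← sum_filter_window_eq h2NL f (fun l => h0 l * (starRingEnd ℂ) (ht0 l)) hsupp]
  refine sum_congr rfl fun j hj => ?_
  rw [hslice, hfs, ZMod.val_natCast_of_lt (mem_range.1 (mem_filter.1 hj).1), mul_assoc]

/-- Proposition 3: perfect reconstruction of the sliCQ transform.  Dual NSG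
systems on ℂ^{2N} for the slice transforms, together with slicing windows h₀, h̃₀ whose product
vanishes outside {-N,…,N-1} mod L and whose translates by multiples of N sum to 1, yield
perfect reconstruction of every f ∈ ℂ^L by slicing, CQ-NSGT analysis/synthesis on each slice,
and windowed overlap-add. -/
theorem slicq_stmt8 {L N : ℕ} (hL : 1 ≤ L) (hN : 1 ≤ N) (hNL : N ∣ L) (h2NL : 2 * N ≤ L)
    {ι : Type*} [Fintype ι]
    (g gt : ι → ZMod (2 * N) → ℂ) (M : ι → ℕ) (hM : ∀ k, 1 ≤ M k)
    (ψ ψt : ι → ℕ → ZMod (2 * N) → ℂ)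
    (hψ : ∀ k n (j : ZMod (2 * N)),
      ψ k n j = Complex.exp (-(2 * Real.pi * Complex.I * (j.val : ℂ) * (n : ℂ)) / (M k : ℂ)) * g k j)
    (hψt : ∀ k n (j : ZMod (2 * N)),
      ψt k n j = Complex.exp (-(2 * Real.pi * Complex.I * (j.val : ℂ) * (n : ℂ)) / (M k : ℂ)) * gt k j)
    (hdual : ∀ h : ZMod (2 * N) → ℂ, ∀ j : ZMod (2 * N),
      ∑ k : ι, ∑ n ∈ Finset.range (M k), ip (2 * N) h (ψ k n) * ψt k n j = h j)
    (h0 ht0 : ZMod L → ℂ)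
    (hsupp : ∀ l : ZMod L,
      l ∉ (Finset.range (2 * N)).image (fun i : ℕ => (i : ZMod L) - (N : ZMod L)) →
        h0 l * (starRingEnd ℂ) (ht0 l) = 0)
    (hpart : ∀ l : ZMod L,
      ∑ m ∈ Finset.range (L / N),
        h0 (l - ((m * N : ℕ) : ZMod L)) * (starRingEnd ℂ) (ht0 (l - ((m * N : ℕ) : ZMod L))) = 1)
    (f : ZMod L → ℂ)
    -- the slices f^m[j] = f[j+(m-1)N]·h₀[j-N]
    (fs : ℕ → ZMod (2 * N) → ℂ)
    (hfs : ∀ (m : ℕ) (j : ZMod (2 * N)),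
      fs m j = f ((j.val : ZMod L) + ((((m : ℤ) - 1) * (N : ℤ) : ℤ) : ZMod L)) *
        h0 ((j.val : ZMod L) - (N : ZMod L)))
    -- the slice coefficients c^m_{n,k} = ⟨(f^m)^, ψ_{n,k}⟩
    (c : ℕ → ι → ℕ → ℂ)
    (hc : ∀ m k n, c m k n = ip (2 * N) (dft (2 * N) (fs m)) (ψ k n))
    -- the reconstructed slices f̃^m
    (ftld : ℕ → ZMod (2 * N) → ℂ)
    (hftld : ∀ m : ℕ,
      ftld m = idft (2 * N) (fun j => ∑ k : ι, ∑ n ∈ Finset.range (M k), c m k n * ψt k n j))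
    -- the sliCQ synthesis output f̃ by windowed overlap-add
    (fout : ZMod L → ℂ)
    (hfout : ∀ i : ZMod L,
      fout i = ∑ m ∈ Finset.range (L / N),
        ∑ j ∈ (Finset.range (2 * N)).filter
            (fun j : ℕ => (j : ZMod L) + ((((m : ℤ) - 1) * (N : ℤ) : ℤ) : ZMod L) = i),
          ftld m (j : ZMod (2 * N)) * (starRingEnd ℂ) (ht0 ((j : ZMod L) - (N : ZMod L)))) :
    fout = f :=
  slicq_stmt8_general hN h2NL M ψ ψt hdual h0 ht0 hsupp hpart f fs hfs c hc ftld hftld fout hfout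
end

section
/- (Proposition 4, sliCQ approximates the full-length CQ-NSGT.) Let L, N ∈ ℕ with 2N ∣ L, let I_K be a finite index set, and for each k ∈ I_K let a_k ∈ ℕ with a_k ∣ N and ǧ^L_k ∈ ℂ^L, with 2N-periodization ǧ_k ∈ ℂ^{2N}, ǧ_k[l] = Σ_{j=0}^{L/(2N)−1} ǧ^L_k[(l + 2jN) mod L]. Let h₀ ∈ ℂ^L vanish outside {−N,…,N−1} mod L and satisfy Σ_{m=0}^{L/N−1} h₀[l − mN] = 1 for all l; set h_m = T_{mN} h₀ (m mod L/N). For f ∈ ℂ^L define the full-length coefficients c_{n,k} = ⟨f, T_{n a_k} ǧ^L_k⟩, the slices f^m[j] = f[(j+(m−1)N) mod L]·h₀[(j−N) mod L] ∈ ℂ^{2N}, the slice coefficients c^m_{ν,k} = ⟨f^m, T_{ν a_k} ǧ_k⟩_{ℂ^{2N}}, and, for n = m·(N/a_k) + n^s with 0 ≤ n^s < N/a_k, the two sliCQ layers s⁰_{n,k} = c^{m}_{n^s+N/a_k, k} and s¹_{n,k} = c^{m+1}_{n^s, k}. Then for all such n and all k ∈ I_K, |s⁰_{n,k} + s¹_{n,k}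 − c_{n,k}| ≤ ‖f‖₂ · ( ‖(1 − h₀ − h₁)·T_{n^s a_k} ǧ^L_k‖₂ + ‖(h₀ + h₁)·Σ_{j=1}^{L/(2N)−1} T_{n^s a_k + 2jN} ǧ^L_k‖₂ ). -/
/-!
Each slice coefficient is a full-length inner product of `f` with the translated window times
the translated 2N-periodization of the atom: the window is supported in one period, on which the
`ZMod (2N)` translation of the periodized atom lifts to `ZMod L`. Adding the two layers therefore
produces the window `h₀ + h₁`, and writing the periodization as the atom plus its aliases
`j = 1, …, L/(2N) - 1` leaves, after subtracting `c_{n,k}`, an inner product of `f` with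
`(h₀ + h₁ - 1) · atom + (h₀ + h₁) · aliases`, translated by `mN`. Cauchy–Schwarz and the
translation invariance of `‖·‖₂` give the bound.
-/

noncomputable def norm2 (L : ℕ) (f : ZMod L → ℂ) : ℝ :=
  Real.sqrt (∑ l ∈ Finset.range L, ‖f (l : ZMod L)‖ ^ 2)

open Finset ComplexConjugate

section Sums

variable {M : Type*} [AddCommMonoid M] {L : ℕ} [NeZero L]

lemma ZMod.sum_range_eq_sum_of_support {d : ℕ} (hdL : d ≤ L) (F : ZMod L → M)
    (hF : ∀ x ∉ (range d).image ((↑) : ℕ → ZMod L), F x = 0) :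
    ∑ j ∈ range d, F j = ∑ x, F x := by
  have hinj : Set.InjOn ((↑) : ℕ → ZMod L) (range d) := fun i hi j hj hij => by
    rw [← ZMod.val_cast_of_lt (lt_of_lt_of_le (mem_range.1 hi) hdL),
      ← ZMod.val_cast_of_lt (lt_of_lt_of_le (mem_range.1 hj) hdL), hij]
  rw [← sum_image hinj]
  exact sum_subset (subset_univ _) fun x _ hx => hF x hx

lemma ZMod.sum_range_natCast (F : ZMod L → M) : ∑ j ∈ range L, F j = ∑ x, F x :=
  sum_range_eq_sum_of_support le_rfl F fun x hx =>
    absurd (mem_image.2 ⟨x.val, mem_range.2 x.val_lt, x.natCast_zmod_val⟩) hx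

lemma Function.Periodic.apply_val_castHom {α : Type*} {d : ℕ} (hd : d ∣ L) {G : ZMod L → α}
    (hG : Function.Periodic G (d : ZMod L)) (z : ZMod L) :
    G ((ZMod.castHom hd (ZMod d) z).val : ZMod L) = G z := by
  obtain ⟨v, rfl⟩ := ZMod.natCast_zmod_surjective z
  rw [map_natCast, ZMod.val_natCast]
  conv_rhs => rw [← Nat.mod_add_div v d, Nat.cast_add, Nat.cast_mul, mul_comm]
  exact (hG.nat_mul _ _).symm

end Sums

section Periodization

variable {M : Type*} [AddCommMonoid M] {L d : ℕ}

def periodize (L d : ℕ) (g : ZMod L → M) (y : ZMod L) : M :=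
  ∑ p ∈ range (L / d), g (y + ((p * d : ℕ) : ZMod L))

lemma periodic_periodize (hd : d ∣ L) (g : ZMod L → M) :
    Function.Periodic (periodize L d g) (d : ZMod L) := by
  intro y
  set F : ℕ → M := fun p => g (y + ((p * d : ℕ) : ZMod L))
  have hF : F (L / d) = F 0 := by
    simp only [F, Nat.div_mul_cancel hd, ZMod.natCast_self, zero_mul, Nat.cast_zero]
  have hshift : ∀ p : ℕ, g (y + d + ((p * d : ℕ) : ZMod L)) = F (p + 1) := fun p => by
    simp only [F]; push_cast; ring_nf
  simp only [periodize, hshift]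
  obtain hP | ⟨Q, hQ⟩ : L / d = 0 ∨ ∃ Q, L / d = Q + 1 := by cases L / d <;> simp
  · simp [hP]
  · rw [hQ, sum_range_succ, ← hQ, hF, hQ, sum_range_succ' F]

lemma periodize_eq_add_sum_Ico_sub [NeZero L] (hd : d ∣ L) (g : ZMod L → M) (y : ZMod L) :
    periodize L d g y = g y + ∑ p ∈ Ico 1 (L / d), g (y - ((p * d : ℕ) : ZMod L)) := by
  have hd0 : 0 < d := Nat.pos_of_ne_zero fun h => NeZero.ne L (zero_dvd_iff.1 (h ▸ hd))
  have hP : 1 ≤ L / d := Nat.div_pos (Nat.le_of_dvd (NeZero.pos L) hd) hd0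
  rw [periodize, range_eq_Ico, sum_eq_sum_Ico_succ_bot hP, zero_mul, Nat.cast_zero, add_zero]
  congr 1
  -- reflect `p ↦ L / d - p`: the shifts `p * d` and `(L / d - p) * d` add up to `L`
  have hreflect := sum_Ico_reflect (fun p => g (y - ((p * d : ℕ) : ZMod L))) 1
    (m := L / d) (n := L / d) (Nat.le_succ _)
  simp only [Nat.add_sub_cancel_left, Nat.add_sub_cancel] at hreflect
  rw [← hreflect]
  refine sum_congr rfl fun p hp => congrArg g ?_
  have hpd : p * d ≤ L :=
    (Nat.mul_le_mul_right d (mem_Ico.1 hp).2.le).trans (Nat.div_mul_le_self L d)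
  rw [Nat.sub_mul, Nat.div_mul_cancel hd, Nat.cast_sub hpd, ZMod.natCast_self]
  ring

end Periodization

section Norm2

variable {L : ℕ} [NeZero L]

lemma norm2_eq_sqrt_sum (f : ZMod L → ℂ) : norm2 L f = √(∑ x, ‖f x‖ ^ 2) := by
  rw [norm2, ZMod.sum_range_natCast fun x => ‖f x‖ ^ 2]

lemma norm2_congr_norm {f g : ZMod L → ℂ} (h : ∀ x, ‖f x‖ = ‖g x‖) :
    norm2 L f = norm2 L g := by
  simp only [norm2_eq_sqrt_sum, h]

lemma norm2_comp_sub (f : ZMod L → ℂ) (y : ZMod L) :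
    norm2 L (fun x => f (x - y)) = norm2 L f := by
  simp only [norm2_eq_sqrt_sum]
  rw [Fintype.sum_equiv (Equiv.subRight y) (fun x => ‖f (x - y)‖ ^ 2)
    (fun x => ‖f x‖ ^ 2) fun _ => rfl]

lemma norm_sum_mul_le_norm2_mul_norm2 (f z : ZMod L → ℂ) :
    ‖∑ x, f x * z x‖ ≤ norm2 L f * norm2 L z := by
  rw [← ZMod.sum_range_natCast]
  calc ‖∑ j ∈ range L, f j * z j‖ ≤ ∑ j ∈ range L, ‖f j‖ * ‖z j‖ :=
        (norm_sum_le _ _).trans_eq (by simp only [norm_mul])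
    _ ≤ norm2 L f * norm2 L z := Real.sum_mul_le_sqrt_mul_sqrt _ _ _

end Norm2

/-- A window supported in `[-s, d - s)` confines the slice sum to one period, on which
the `ZMod d`-translation of the `d`-periodic `G` agrees with its translation in `ZMod L`. -/
lemma sum_slice_eq {L d : ℕ} [NeZero L] (hd : d ∣ L) (f w G : ZMod L → ℂ) (s τ : ZMod L)
    (b : ℕ)
    (hw : ∀ x ∉ (range d).image (fun i : ℕ => (i : ZMod L) - s), w x = 0)
    (hG : Function.Periodic G (d : ZMod L)) :
    ∑ j ∈ range d, f (((j : ZMod d).val : ZMod L) + τ) * w (((j : ZMod d).val : ZMod L) - s) *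
        conj (G ((((j : ZMod d) - (b : ZMod d)).val : ZMod L)))
      = ∑ x, f x * w (x - τ - s) * conj (G (x - τ - b)) := by
  set H : ZMod L → ℂ := fun x => f (x + τ) * w (x - s) * conj (G (x - b))
  have hterm : ∀ j ∈ range d, f (((j : ZMod d).val : ZMod L) + τ) *
      w (((j : ZMod d).val : ZMod L) - s) * conj (G ((((j : ZMod d) - (b : ZMod d)).val : ZMod L)))
        = H j := fun j hj => by
    have hcast : (j : ZMod d) - (b : ZMod d) = ZMod.castHom hd (ZMod d) ((j : ZMod L) - b) := by
      simp only [map_sub, map_natCast]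
    rw [ZMod.val_cast_of_lt (mem_range.1 hj), hcast, hG.apply_val_castHom hd]
  have hH_support : ∀ x ∉ (range d).image ((↑) : ℕ → ZMod L), H x = 0 := fun x hx => by
    have : w (x - s) = 0 := hw _ fun hmem => hx <| by
      obtain ⟨i, hi, his⟩ := mem_image.1 hmem
      exact mem_image.2 ⟨i, hi, sub_left_injective his⟩
    simp [H, this]
  rw [sum_congr rfl hterm,
    ZMod.sum_range_eq_sum_of_support (Nat.le_of_dvd (NeZero.pos L) hd) H hH_support,
    ← Fintype.sum_equiv (Equiv.subRight τ) (fun x => H (x - τ)) H fun _ => rfl]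
  simp only [H, sub_add_cancel, sub_right_comm _ τ]

lemma norm_two_window_error_le {L : ℕ} [NeZero L] (f w₀ w₁ P g r : ZMod L → ℂ)
    (hP : ∀ y, P y = g y + r y) (μ : ZMod L) :
    ‖∑ x, f x * w₀ (x - μ) * conj (P (x - μ))
        + ∑ x, f x * w₁ (x - μ) * conj (P (x - μ)) - ∑ x, f x * conj (g (x - μ))‖
      ≤ norm2 L f * (norm2 L (fun x => (1 - w₀ x - w₁ x) * g x)
          + norm2 L (fun x => (w₀ x + w₁ x) * r x)) := by
  set A : ZMod L → ℂ := fun x => (w₀ (x - μ) + w₁ (x - μ) - 1) * conj (g (x - μ))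
  set B : ZMod L → ℂ := fun x => (w₀ (x - μ) + w₁ (x - μ)) * conj (r (x - μ))
  have hsplit : ∑ x, f x * w₀ (x - μ) * conj (P (x - μ))
        + ∑ x, f x * w₁ (x - μ) * conj (P (x - μ)) - ∑ x, f x * conj (g (x - μ))
      = ∑ x, f x * A x + ∑ x, f x * B x := by
    simp only [← sum_add_distrib, ← sum_sub_distrib, A, B, hP, map_add]
    exact sum_congr rfl fun x _ => by ring
  have hA : norm2 L A = norm2 L (fun x => (1 - w₀ x - w₁ x) * g x) := by
    rw [← norm2_comp_sub (fun x => (1 - w₀ x - w₁ x) * g x) μ]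
    refine norm2_congr_norm fun x => ?_
    rw [norm_mul, norm_mul, Complex.norm_conj, ← norm_neg, neg_sub, sub_sub]
  have hB : norm2 L B = norm2 L (fun x => (w₀ x + w₁ x) * r x) := by
    rw [← norm2_comp_sub (fun x => (w₀ x + w₁ x) * r x) μ]
    exact norm2_congr_norm fun x => by rw [norm_mul, norm_mul, Complex.norm_conj]
  rw [hsplit, ← hA, ← hB, mul_add]
  exact (norm_add_le _ _).trans (add_le_add (norm_sum_mul_le_norm2_mul_norm2 f A)
    (norm_sum_mul_le_norm2_mul_norm2 f B))

theorem slicq_stmt12_general {L N : ℕ} (hL : 1 ≤ L) (hdvd : 2 * N ∣ L)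
    {ι : Type*}
    (a : ι → ℕ) (ha : ∀ k, a k ∣ N)
    (gL : ι → ZMod L → ℂ) (gp : ι → ZMod (2 * N) → ℂ)
    (hgp : ∀ (k : ι) (l : ZMod (2 * N)),
      gp k l = ∑ j ∈ Finset.range (L / (2 * N)), gL k ((l.val : ZMod L) + ((2 * j * N : ℕ) : ZMod L)))
    (h0 : ZMod L → ℂ)
    (hsupp : ∀ l : ZMod L,
      l ∉ (Finset.range (2 * N)).image (fun i : ℕ => (i : ZMod L) - (N : ZMod L)) → h0 l = 0)
    (f : ZMod L → ℂ)
    -- full-length coefficients c_{n,k} = ⟨f, T_{n a_k} ǧ^L_k⟩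
    (c : ℕ → ι → ℂ)
    (hc : ∀ (n : ℕ) (k : ι),
      c n k = ∑ l ∈ Finset.range L,
        f (l : ZMod L) * (starRingEnd ℂ) (gL k ((l : ZMod L) - ((n * a k : ℕ) : ZMod L))))
    -- slices f^m[j] = f[j+(m-1)N]·h₀[j-N]
    (fs : ℕ → ZMod (2 * N) → ℂ)
    (hfs : ∀ (m : ℕ) (j : ZMod (2 * N)),
      fs m j = f ((j.val : ZMod L) + ((((m : ℤ) - 1) * (N : ℤ) : ℤ) : ZMod L)) *
        h0 ((j.val : ZMod L) - (N : ZMod L)))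
    -- slice coefficients c^m_{ν,k} = ⟨f^m, T_{ν a_k} ǧ_k⟩
    (cs : ℕ → ℕ → ι → ℂ)
    (hcs : ∀ (m ν : ℕ) (k : ι),
      cs m ν k = ∑ j ∈ Finset.range (2 * N),
        fs m (j : ZMod (2 * N)) *
          (starRingEnd ℂ) (gp k ((j : ZMod (2 * N)) - ((ν * a k : ℕ) : ZMod (2 * N)))))
    (k : ι) (m : ℕ) (ns : ℕ)
    (n : ℕ) (hn : n = m * (N / a k) + ns) :
    ‖cs m (ns + N / a k) k + cs (m + 1) ns k - c n k‖
      ≤ norm2 L f *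
        (norm2 L (fun l : ZMod L =>
            (1 - h0 l - h0 (l - (N : ZMod L))) * gL k (l - ((ns * a k : ℕ) : ZMod L)))
          + norm2 L (fun l : ZMod L =>
              (h0 l + h0 (l - (N : ZMod L))) *
                ∑ j ∈ Finset.Ico 1 (L / (2 * N)),
                  gL k (l - ((ns * a k + 2 * j * N : ℕ) : ZMod L)))) := by
  have : NeZero L := ⟨by omega⟩
  obtain ⟨μ, hμ⟩ : ∃ μ : ZMod L, μ = ((m * N : ℕ) : ZMod L) := ⟨_, rfl⟩
  obtain ⟨α, hα⟩ : ∃ α : ZMod L, α = ((ns * a k : ℕ) : ZMod L) := ⟨_, rfl⟩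
  have hgp' : ∀ y, gp k y = periodize L (2 * N) (gL k) (y.val : ZMod L) := fun y => by
    rw [hgp]; exact sum_congr rfl fun j _ => by push_cast; ring_nf
  have hslice : ∀ m' ν : ℕ, cs m' ν k
      = ∑ x, f x * h0 (x - ((((m' : ℤ) - 1) * N : ℤ) : ZMod L) - N) * conj (periodize L (2 * N)
          (gL k) (x - ((((m' : ℤ) - 1) * N : ℤ) : ZMod L) - ((ν * a k : ℕ) : ZMod L))) := by
    intro m' ν
    rw [hcs]; simp only [hfs, hgp']
    exact sum_slice_eq hdvd f h0 _ _ _ _ hsupp (periodic_periodize hdvd _)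
  have hs0 : cs m (ns + N / a k) k
      = ∑ x, f x * h0 (x - μ) * conj (periodize L (2 * N) (gL k) (x - μ - α)) := by
    have hτ : ((((m : ℤ) - 1) * N : ℤ) : ZMod L) = μ - N := by rw [hμ]; push_cast; ring
    have hν : (((ns + N / a k) * a k : ℕ) : ZMod L) = α + N := by
      rw [hα, add_mul, Nat.div_mul_cancel (ha k), Nat.cast_add]
    simp only [hslice, hτ, hν, sub_sub, sub_add_cancel, sub_add_add_cancel]
  have hs1 : cs (m + 1) ns k
      = ∑ x, f x * h0 (x - μ - N) * conj (periodize L (2 * N) (gL k) (x - μ - α)) := by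
    have hτ : (((((m + 1 : ℕ) : ℤ) - 1) * N : ℤ) : ZMod L) = μ := by rw [hμ]; push_cast; ring
    rw [hslice, hτ, hα]
  have hcn : c n k = ∑ x, f x * conj (gL k (x - μ - α)) := by
    have hna : ((n * a k : ℕ) : ZMod L) = μ + α := by
      rw [hμ, hα, hn, add_mul, mul_assoc, Nat.div_mul_cancel (ha k), Nat.cast_add]
    rw [hc, ZMod.sum_range_natCast fun x => f x * conj (gL k (x - ((n * a k : ℕ) : ZMod L))),
      hna]
    simp only [sub_sub]
  have hP : ∀ y, periodize L (2 * N) (gL k) (y - α) = gL k (y - α)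
      + ∑ j ∈ Ico 1 (L / (2 * N)), gL k (y - ((ns * a k + 2 * j * N : ℕ) : ZMod L)) := by
    intro y
    rw [periodize_eq_add_sum_Ico_sub hdvd, hα]
    congr 1
    exact sum_congr rfl fun j _ => by push_cast; ring_nf
  rw [hs0, hs1, hcn, ← hα]
  exact norm_two_window_error_le f h0 (fun y => h0 (y - N)) _ (fun y => gL k (y - α)) _ hP μ

/-- Proposition 4: the sliCQ coefficients approximate the full-length CQ-NSGT
coefficients:  |s⁰_{n,k} + s¹_{n,k} - c_{n,k}|
  ≤ ‖f‖₂·(‖(1-h₀-h₁)·T_{n^s a_k} ǧ^L_k‖₂ + ‖(h₀+h₁)·Σ_{j=1}^{L/(2N)-1} T_{n^s a_k+2jN} ǧ^L_k‖₂). -/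
theorem slicq_stmt12 {L N : ℕ} (hL : 1 ≤ L) (hN : 1 ≤ N) (hdvd : 2 * N ∣ L)
    {ι : Type*} [Fintype ι]
    (a : ι → ℕ) (ha : ∀ k, a k ∣ N)
    (gL : ι → ZMod L → ℂ) (gp : ι → ZMod (2 * N) → ℂ)
    (hgp : ∀ (k : ι) (l : ZMod (2 * N)),
      gp k l = ∑ j ∈ Finset.range (L / (2 * N)), gL k ((l.val : ZMod L) + ((2 * j * N : ℕ) : ZMod L)))
    (h0 : ZMod L → ℂ)
    (hsupp : ∀ l : ZMod L,
      l ∉ (Finset.range (2 * N)).image (fun i : ℕ => (i : ZMod L) - (N : ZMod L)) → h0 l = 0)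
    (hpart : ∀ l : ZMod L, ∑ m ∈ Finset.range (L / N), h0 (l - ((m * N : ℕ) : ZMod L)) = 1)
    (f : ZMod L → ℂ)
    -- full-length coefficients c_{n,k} = ⟨f, T_{n a_k} ǧ^L_k⟩
    (c : ℕ → ι → ℂ)
    (hc : ∀ (n : ℕ) (k : ι),
      c n k = ∑ l ∈ Finset.range L,
        f (l : ZMod L) * (starRingEnd ℂ) (gL k ((l : ZMod L) - ((n * a k : ℕ) : ZMod L))))
    -- slices f^m[j] = f[j+(m-1)N]·h₀[j-N]
    (fs : ℕ → ZMod (2 * N) → ℂ)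
    (hfs : ∀ (m : ℕ) (j : ZMod (2 * N)),
      fs m j = f ((j.val : ZMod L) + ((((m : ℤ) - 1) * (N : ℤ) : ℤ) : ZMod L)) *
        h0 ((j.val : ZMod L) - (N : ZMod L)))
    -- slice coefficients c^m_{ν,k} = ⟨f^m, T_{ν a_k} ǧ_k⟩
    (cs : ℕ → ℕ → ι → ℂ)
    (hcs : ∀ (m ν : ℕ) (k : ι),
      cs m ν k = ∑ j ∈ Finset.range (2 * N),
        fs m (j : ZMod (2 * N)) *
          (starRingEnd ℂ) (gp k ((j : ZMod (2 * N)) - ((ν * a k : ℕ) : ZMod (2 * N)))))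
    (k : ι) (m : ℕ) (hm : m < L / N) (ns : ℕ) (hns : ns < N / a k)
    (n : ℕ) (hn : n = m * (N / a k) + ns) :
    ‖cs m (ns + N / a k) k + cs (m + 1) ns k - c n k‖
      ≤ norm2 L f *
        (norm2 L (fun l : ZMod L =>
            (1 - h0 l - h0 (l - (N : ZMod L))) * gL k (l - ((ns * a k : ℕ) : ZMod L)))
          + norm2 L (fun l : ZMod L =>
              (h0 l + h0 (l - (N : ZMod L))) *
                ∑ j ∈ Finset.Ico 1 (L / (2 * N)),
                  gL k (l - ((ns * a k + 2 * j * N : ℕ) : ZMod L)))) :=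
  slicq_stmt12_general hL hdvd a ha gL gp hgp h0 hsupp f c hc fs hfs cs hcs k m ns n hn
end

section
/- (Tukey slicing windows form a uniform partition of unity.) Let L, N, M ∈ ℕ with N ∣ L, L/N ≥ 2 and 0 < M ≤ N. For l ∈ ℤ/Lℤ let d(l) = min(l, L−l) denote the circular distance from l to 0, where l is represented in {0,…,L−1}. Define the Tukey window h₀ : ℤ/Lℤ → ℝ by: h₀[l] = 1 if d(l) ≤ (N−M)/2; h₀[l] = cos²( (π/(2M))·(d(l) − (N−M)/2) ) if (N−M)/2 < d(l) < (N+M)/2; and h₀[l] = 0 otherwise. Then the translates of h₀ by multiples of N form a partition of unity: for every l ∈ ℤ/Lℤ, Σ_{m=0}^{L/N−1} h₀[(l − mN) mod L] = 1. -/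
/-- Tukey slicing windows form a uniform partition of unity: with
d(l) = min(l, L-l) the circular distance to 0 and h₀ the Tukey window with essential
length N and transition areas of length M, the translates of h₀ by multiples of N
sum to 1 at every point. -/
theorem slicq_stmt14 {L N M : ℕ} (hNL : N ∣ L) (hLN : 2 ≤ L / N)
    (hM0 : 0 < M) (hMN : M ≤ N)
    (d : ZMod L → ℕ) (hd : ∀ l : ZMod L, d l = min l.val (L - l.val))
    (h0 : ZMod L → ℝ)
    (hh0 : ∀ l : ZMod L,
      h0 l = if (d l : ℝ) ≤ ((N : ℝ) - M) / 2 then 1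
        else if (d l : ℝ) < ((N : ℝ) + M) / 2 then
          (Real.cos ((Real.pi / (2 * M)) * ((d l : ℝ) - ((N : ℝ) - M) / 2))) ^ 2
        else 0) :
    ∀ l : ZMod L, ∑ m ∈ Finset.range (L / N), h0 (l - ((m * N : ℕ) : ZMod L)) = 1 := by
  intro l
  have hN : 0 < N := lt_of_lt_of_le hM0 hMN
  set k := L / N with hk
  have hL : L = k * N := by rw [hk, Nat.div_mul_cancel hNL]
  have hLpos : 0 < L := by rw [hL]; exact Nat.mul_pos (by omega) hN
  haveI : NeZero L := ⟨hLpos.ne'⟩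
  have hrL : l.val < L := ZMod.val_lt l
  obtain ⟨q, s, hsN, hqk, hrqs⟩ : ∃ q s, s < N ∧ q < k ∧ l.val = q * N + s := by
    refine ⟨l.val / N, l.val % N, Nat.mod_lt _ hN, ?_, ?_⟩
    · rw [Nat.div_lt_iff_lt_mul hN, ← hL]; exact hrL
    · rw [Nat.add_comm]; exact (Nat.mod_add_div' _ _).symm
  set f : ℕ → ℕ := fun m => if m ≤ q then q - m else q + k - m with hf
  have hfk : ∀ m < k, f m < k := by intro m hm; simp only [hf]; split <;> omega
  have hrw : ∀ m ∈ Finset.range k,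
      h0 (l - ((m * N : ℕ) : ZMod L)) = h0 (((s + f m * N : ℕ) : ZMod L)) := by
    intro m hm
    rw [Finset.mem_range] at hm
    have hcong : f m + m ≡ q [MOD k] := by
      simp only [hf]
      split
      · have h1 : q - m + m = q := by omega
        rw [h1]
      · have h1 : q + k - m + m = q + k := by omega
        rw [h1]
        calc q + k ≡ q + 0 [MOD k] := Nat.ModEq.add_left q (Nat.modEq_zero_iff_dvd.mpr dvd_rfl)
        _ = q := by omega
    have hmod : (s + f m * N) + m * N ≡ l.val [MOD L] := by
      have h1 : (f m + m) * N ≡ q * N [MOD k * N] := hcong.mul_right' N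
      rw [hrqs, hL]
      calc (s + f m * N) + m * N = (f m + m) * N + s := by ring
      _ ≡ q * N + s [MOD k * N] := h1.add_right s
    have hcast : ((s + f m * N : ℕ) : ZMod L) + ((m * N : ℕ) : ZMod L) = l := by
      have h2 := (ZMod.natCast_eq_natCast_iff _ _ _).mpr hmod
      push_cast at h2 ⊢
      rw [h2]
      exact ZMod.natCast_rightInverse l
    rw [eq_sub_of_add_eq hcast]
  rw [Finset.sum_congr rfl hrw]
  rw [show ∑ m ∈ Finset.range k, h0 (((s + f m * N : ℕ) : ZMod L))
      = ∑ j ∈ Finset.range k, h0 (((s + j * N : ℕ) : ZMod L)) from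
    Finset.sum_nbij' f f
      (fun m hm => Finset.mem_range.mpr (hfk m (Finset.mem_range.mp hm)))
      (fun m hm => Finset.mem_range.mpr (hfk m (Finset.mem_range.mp hm)))
      (fun m hm => by
        have := Finset.mem_range.mp hm
        simp only [hf]; split_ifs <;> omega)
      (fun m hm => by
        have := Finset.mem_range.mp hm
        simp only [hf]; split_ifs <;> omega)
      (fun m hm => rfl)]
  -- values of the representatives
  have hval : ∀ j < k, ((s + j * N : ℕ) : ZMod L).val = s + j * N := by
    intro j hj
    apply ZMod.val_natCast_of_lt
    calc s + j * N < N + j * N := by omega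
    _ = (j + 1) * N := by ring
    _ ≤ k * N := Nat.mul_le_mul_right N (by omega)
    _ = L := hL.symm
  have hM0' : (0:ℝ) < M := by exact_mod_cast hM0
  have hMN' : (M:ℝ) ≤ N := by exact_mod_cast hMN
  -- middle terms vanish
  have hzero : ∀ j ∈ Finset.range k, j ∉ ({0, k - 1} : Finset ℕ) →
      h0 (((s + j * N : ℕ) : ZMod L)) = 0 := by
    intro j hj hj2
    rw [Finset.mem_range] at hj
    simp only [Finset.mem_insert, Finset.mem_singleton] at hj2
    push_neg at hj2
    obtain ⟨hj0, hj1⟩ := hj2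
    have hdge : N ≤ d (((s + j * N : ℕ) : ZMod L)) := by
      rw [hd, hval j hj, hL]
      have h1 : N ≤ s + j * N := by
        calc N ≤ j * N := Nat.le_mul_of_pos_left N (by omega)
        _ ≤ s + j * N := by omega
      have h2 : s + j * N + N ≤ k * N := by
        have h3 : (j + 2) * N ≤ k * N := Nat.mul_le_mul_right N (by omega)
        nlinarith
      omega
    rw [hh0]
    have hdr : (N : ℝ) ≤ (d (((s + j * N : ℕ) : ZMod L)) : ℝ) := by exact_mod_cast hdge
    rw [if_neg (by linarith), if_neg (by linarith)]
  have hsub : ({0, k - 1} : Finset ℕ) ⊆ Finset.range k := by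
    intro x hx
    simp only [Finset.mem_insert, Finset.mem_singleton] at hx
    rw [Finset.mem_range]; omega
  rw [← Finset.sum_subset hsub (fun x hx hx2 => hzero x hx hx2),
    Finset.sum_pair (show (0:ℕ) ≠ k - 1 by omega)]
  -- compute the two distances
  have hd0 : d (((s + 0 * N : ℕ) : ZMod L)) = s := by
    rw [hd, hval 0 (by omega)]
    have : s + 0 * N = s := by ring
    rw [this, hL]
    have h2 : 2 * N ≤ k * N := Nat.mul_le_mul_right N (by omega)
    exact min_eq_left (by omega)
  have hd1 : d (((s + (k - 1) * N : ℕ) : ZMod L)) = N - s := by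
    rw [hd, hval (k-1) (by omega)]
    have hkN : (k - 1) * N + N = k * N := by
      have : k - 1 + 1 = k := by omega
      calc (k - 1) * N + N = (k - 1 + 1) * N := by ring
      _ = k * N := by rw [this]
    rw [hL]
    have h1 : k * N - (s + (k - 1) * N) = N - s := by omega
    rw [h1]
    have h2 : N ≤ (k - 1) * N := by
      calc N = 1 * N := (one_mul N).symm
      _ ≤ (k - 1) * N := Nat.mul_le_mul_right N (by omega)
    exact min_eq_right (by omega)
  rw [hh0, hh0, hd0, hd1]
  have hcast1 : ((N - s : ℕ) : ℝ) = (N : ℝ) - (s : ℝ) := by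
    rw [Nat.cast_sub hsN.le]
  rw [hcast1]
  set x : ℝ := (s : ℝ) with hx
  set a : ℝ := ((N:ℝ) - M)/2 with ha
  set b : ℝ := ((N:ℝ) + M)/2 with hb
  have hab : a < b := by rw [ha, hb]; linarith
  have hba : a = (N:ℝ) - b := by rw [ha, hb]; ring
  rcases le_or_gt x a with h | h
  · rw [if_pos h]
    rw [if_neg (by rw [not_le]; linarith [hba]), if_neg (by rw [not_lt]; linarith [hba])]
    norm_num
  · rcases lt_or_ge x b with h2 | h2
    · rw [if_neg (by linarith), if_pos h2]
      rw [if_neg (by rw [not_le]; linarith [hba]), if_pos (by linarith [hba])]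
      have hc : Real.pi / (2 * M) * ((N : ℝ) - x - a) =
          Real.pi / 2 - Real.pi / (2 * M) * (x - a) := by
        rw [ha]; field_simp; ring
      rw [hc, Real.cos_pi_div_two_sub]
      exact Real.cos_sq_add_sin_sq _
    · rw [if_neg (by linarith), if_neg (by linarith)]
      rw [if_pos (by linarith [hba])]
      norm_num
end
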